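/- Assume that Im⟨Au, u⟩ ≤ 0 for all u ∈ U. Then the scattering operator S := Id + 2iTB(A − iB*TB)⁻¹B* is a contraction with respect to the T⁻¹-norm: ‖Sq‖_{T⁻¹} ≤ ‖q‖_{T⁻¹} for all q ∈ W. -/

import Mathlib

noncomputable section
open scoped InnerProductSpace
open LinearMap

variable {Uv W : Type*}
  [NormedAddCommGroup Uv] [InnerProductSpace ℂ Uv] [FiniteDimensional ℂ Uv]
  [NormedAddCommGroup W] [InnerProductSpace ℂ W] [FiniteDimensional ℂ W]

/-- The norm `‖p‖_{T⁻¹} := ⟨T⁻¹p, p⟩^{1/2}` on `W`. -/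
def tinvNorm (T : W →ₗ[ℂ] W) [Invertible T] (p : W) : ℝ :=
  Real.sqrt (⟪(⅟T) p, p⟫_ℂ).re

/-- The impedance-shifted operator `A − iB*TB : U → U`. -/
def impOp (A : Uv →ₗ[ℂ] Uv) (B : Uv →ₗ[ℂ] W) (T : W →ₗ[ℂ] W) : Uv →ₗ[ℂ] Uv :=
  A - Complex.I • (adjoint B ∘ₗ T ∘ₗ B)

/-- The scattering operator `S := Id + 2iTB(A − iB*TB)⁻¹B* : W → W`. -/
def scatterOp (A : Uv →ₗ[ℂ] Uv) (B : Uv →ₗ[ℂ] W) (T : W →ₗ[ℂ] W)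
    [Invertible (impOp A B T)] : W →ₗ[ℂ] W :=
  LinearMap.id + (2 * Complex.I) • (T ∘ₗ B ∘ₗ ⅟(impOp A B T) ∘ₗ adjoint B)

/-! With `u := (A − iB*TB)⁻¹ B* q` one has `S q = q + 2i T B u`. Expanding the `T⁻¹`-form with
`T* = T`, and using `⟨q, B u⟩ = ⟨B* q, u⟩ = ⟨(A − iB*TB) u, u⟩`, the terms in `⟨T B u, B u⟩`
cancel and leave the energy identity `‖S q‖²_{T⁻¹} = ‖q‖²_{T⁻¹} + 4 Im ⟪u, A u⟫`. -/

theorem re_inner_invOf_add_two_I_smul (T : W →ₗ[ℂ] W) [Invertible T] (hT : adjoint T = T)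
    (q v : W) :
    (⟪(⅟T) (q + (2 * Complex.I) • T v), q + (2 * Complex.I) • T v⟫_ℂ).re
      = (⟪(⅟T) q, q⟫_ℂ).re - 4 * (⟪q, v⟫_ℂ).im + 4 * (⟪T v, v⟫_ℂ).re := by
  have hinv : (⅟T) (T v) = v := by
    rw [← Module.End.mul_apply, invOf_mul_self, Module.End.one_apply]
  have hcross : ⟪(⅟T) q, T v⟫_ℂ = ⟪q, v⟫_ℂ := by
    rw [← adjoint_inner_left, hT, ← Module.End.mul_apply, mul_invOf_self,
      Module.End.one_apply]
  have hswap : ⟪v, q⟫_ℂ = starRingEnd ℂ ⟪q, v⟫_ℂ := (inner_conj_symm v q).symm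
  have hdiag : (⟪v, T v⟫_ℂ).re = (⟪T v, v⟫_ℂ).re := by
    rw [← inner_conj_symm, Complex.conj_re]
  rw [map_add, map_smul, hinv]
  simp only [inner_add_left, inner_add_right, inner_smul_left, inner_smul_right, hcross,
    hswap, Complex.add_re, Complex.mul_re, Complex.conj_re, Complex.conj_im, map_mul,
    Complex.conj_I, Complex.conj_ofNat, Complex.I_re, Complex.I_im, Complex.neg_re,
    Complex.neg_im, Complex.mul_im]
  norm_num
  rw [hdiag]
  ring

theorem im_inner_impOp_self (A : Uv →ₗ[ℂ] Uv) (B : Uv →ₗ[ℂ] W) (T : W →ₗ[ℂ] W) (u : Uv) :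
    (⟪impOp A B T u, u⟫_ℂ).im = (⟪T (B u), B u⟫_ℂ).re - (⟪u, A u⟫_ℂ).im := by
  have hA : ⟪A u, u⟫_ℂ = starRingEnd ℂ ⟪u, A u⟫_ℂ := (inner_conj_symm (A u) u).symm
  simp only [impOp, LinearMap.sub_apply, LinearMap.smul_apply, comp_apply, inner_sub_left,
    inner_smul_left, adjoint_inner_left, hA, Complex.conj_I, Complex.sub_im, Complex.conj_im,
    Complex.mul_im, Complex.I_re, Complex.I_im, Complex.neg_re, Complex.neg_im]
  ring

theorem scatterOp_apply (A : Uv →ₗ[ℂ] Uv) (B : Uv →ₗ[ℂ] W) (T : W →ₗ[ℂ] W)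
    [Invertible (impOp A B T)] (q : W) :
    scatterOp A B T q = q + (2 * Complex.I) • T (B ((⅟(impOp A B T)) (adjoint B q))) :=
  rfl

theorem re_inner_invOf_scatterOp (A : Uv →ₗ[ℂ] Uv) (B : Uv →ₗ[ℂ] W) (T : W →ₗ[ℂ] W)
    [Invertible T] (hT : adjoint T = T) [Invertible (impOp A B T)] (q : W) :
    (⟪(⅟T) (scatterOp A B T q), scatterOp A B T q⟫_ℂ).re
      = (⟪(⅟T) q, q⟫_ℂ).re
        + 4 * (⟪(⅟(impOp A B T)) (adjoint B q), A ((⅟(impOp A B T)) (adjoint B q))⟫_ℂ).im := by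
  set u := (⅟(impOp A B T)) (adjoint B q)
  have hu : impOp A B T u = adjoint B q := by
    rw [← Module.End.mul_apply, mul_invOf_self, Module.End.one_apply]
  have hq : ⟪q, B u⟫_ℂ = ⟪impOp A B T u, u⟫_ℂ := by
    rw [hu, adjoint_inner_left]
  rw [scatterOp_apply, re_inner_invOf_add_two_I_smul T hT, hq, im_inner_impOp_self]
  ring

/-- In Mathlib's convention `⟪u, A u⟫` is the paper's `⟨Au, u⟩`. -/
theorem scatterOp_contraction_general
    (A : Uv →ₗ[ℂ] Uv) (B : Uv →ₗ[ℂ] W)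
    (T : W →ₗ[ℂ] W) [Invertible T]
    (hTsa : adjoint T = T)
    [Invertible (impOp A B T)]
    (hA : ∀ u : Uv, (⟪u, A u⟫_ℂ).im ≤ 0) :
    ∀ q : W, tinvNorm T (scatterOp A B T q) ≤ tinvNorm T q := by
  intro q
  refine Real.sqrt_le_sqrt ?_
  rw [re_inner_invOf_scatterOp A B T hTsa]
  linarith [hA ((⅟(impOp A B T)) (adjoint B q))]

/-- if `Im⟨Au, u⟩ ≤ 0` for all `u` (with the quadratic form of `A`
written in the convention where the pairing is linear in the operator slot, i.e.
`⟨Au, u⟩ = ⟪u, A u⟫` in Mathlib's convention), then the scattering operator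
`S = Id + 2iTB(A − iB*TB)⁻¹B*` is a contraction for the `T⁻¹`-norm. -/
theorem scatterOp_contraction
    (A : Uv →ₗ[ℂ] Uv) (B : Uv →ₗ[ℂ] W)
    (T : W →ₗ[ℂ] W) [Invertible T]
    (hTsa : adjoint T = T)
    (hTpos : ∀ w : W, w ≠ 0 → 0 < (⟪T w, w⟫_ℂ).re)
    [Invertible (impOp A B T)]
    (hA : ∀ u : Uv, (⟪u, A u⟫_ℂ).im ≤ 0) :
    ∀ q : W, tinvNorm T (scatterOp A B T q) ≤ tinvNorm T q :=
  scatterOp_contraction_general A B T hTsa hA
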